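/- Let p : ℝ³ → ℝ³ be twice continuously differentiable and suppose its symmetric gradient vanishes identically, i.e. ⟨Dp(x) v, w⟩ + ⟨Dp(x) w, v⟩ = 0 for all x, v, w ∈ ℝ³. Then there exist α, ω ∈ ℝ³ such that p(x) = α + ω ×ᵥ x for all x ∈ ℝ³; that is, p is a rigid body motion. -/

import Mathlib

/-!
Differentiating `⟨Dp(x) v, w⟩ + ⟨Dp(x) w, v⟩ = 0` in a direction `u` shows that
`T(u, v, w) = ⟨D²p(x)(u, v), w⟩` is antisymmetric in `(v, w)`, while Schwarz's theorem makes it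
symmetric in `(u, v)`. A trilinear form with both properties vanishes, so `Dp` is a constant `A`,
`p(x) = p(0) + A x`, and `A` is skew-symmetric; on `ℝ³` every skew-symmetric map is `x ↦ ω ×ᵥ x`.
-/

open Matrix

lemma eq_zero_of_symm_of_antisymm {α M : Type*} [AddCommGroup M] [IsAddTorsionFree M]
    (T : α → α → α → M) (hsymm : ∀ u v w, T u v w = T v u w)
    (hanti : ∀ u v w, T u v w = -T u w v) (u v w : α) : T u v w = 0 := by
  rw [← self_eq_neg]
  calc T u v w = -T u w v := hanti u v w
    _ = -T w u v := by rw [hsymm]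
    _ = T w v u := by rw [hanti, neg_neg]
    _ = T v w u := hsymm w v u
    _ = -T v u w := hanti v w u
    _ = -T u v w := by rw [hsymm]

lemma exists_cross_eq_of_dotProduct_skew {R : Type*} [CommRing R] [IsAddTorsionFree R]
    (A : (Fin 3 → R) →ₗ[R] Fin 3 → R) (hA : ∀ v w, A v ⬝ᵥ w + A w ⬝ᵥ v = 0) :
    ∃ ω, ∀ x, A x = ω ⨯₃ x := by
  set M := LinearMap.toMatrix' A with hM
  have hskew : ∀ i j, M i j = -M j i := fun i j => by
    simpa [M, LinearMap.toMatrix'_apply, dotProduct_single, eq_neg_iff_add_eq_zero]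
      using hA (Pi.single j 1) (Pi.single i 1)
  have hdiag : ∀ i, M i i = 0 := fun i => self_eq_neg.mp (hskew i i)
  refine ⟨![M 2 1, M 0 2, M 1 0], fun x => ?_⟩
  rw [← LinearMap.toMatrix'_mulVec A x, ← hM]
  clear_value M
  ext i
  fin_cases i <;>
    simp only [mulVec, dotProduct, Fin.sum_univ_three, cross_apply, hdiag, hskew 0 1, hskew 0 2,
      hskew 1 2, Fin.zero_eta, Fin.mk_one, Fin.reduceFinMk, Fin.isValue, cons_val_zero, cons_val_one,
      cons_val] <;> ring

lemma apply_eq_apply_zero_add_of_fderiv_eq {𝕜 E F : Type*} [NontriviallyNormedField 𝕜]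
    [IsRCLikeNormedField 𝕜] [NormedAddCommGroup E] [NormedSpace 𝕜 E] [NormedAddCommGroup F]
    [NormedSpace 𝕜 F] {f : E → F} {A : E →L[𝕜] F} (hf : Differentiable 𝕜 f)
    (hf' : ∀ x, fderiv 𝕜 f x = A) (x : E) : f x = f 0 + A x := by
  refine congrFun (eq_of_fderiv_eq (g := fun y => f 0 + A y) hf
    ((differentiable_const _).add A.differentiable) (fun y => ?_) 0 (by simp)) x
  rw [hf', fderiv_const_add, A.fderiv]

section SymmetricGradient

variable {n : ℕ} {p : (Fin n → ℝ) → Fin n → ℝ}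

lemma fderiv_fderiv_dotProduct_antisymm (hp : Differentiable ℝ (fderiv ℝ p))
    (hsym : ∀ x v w, fderiv ℝ p x v ⬝ᵥ w + fderiv ℝ p x w ⬝ᵥ v = 0) (x u v w : Fin n → ℝ) :
    fderiv ℝ (fderiv ℝ p) x u v ⬝ᵥ w = -(fderiv ℝ (fderiv ℝ p) x u w ⬝ᵥ v) := by
  let Φ : ((Fin n → ℝ) →L[ℝ] Fin n → ℝ) →L[ℝ] ℝ := LinearMap.toContinuousLinearMap
    { toFun := fun A => A v ⬝ᵥ w + A w ⬝ᵥ v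
      map_add' := fun A B => by simp only [_root_.add_apply, add_dotProduct]; ring
      map_smul' := fun c A => by simp [smul_dotProduct, mul_add] }
  have hΦ : Φ ∘ fderiv ℝ p = fun _ => 0 := funext fun y => hsym y v w
  have hderiv : HasFDerivAt (Φ ∘ fderiv ℝ p) (Φ.comp (fderiv ℝ (fderiv ℝ p) x)) x :=
    Φ.hasFDerivAt.comp x (hp x).hasFDerivAt
  rw [hΦ] at hderiv
  exact eq_neg_of_add_eq_zero_left <|
    DFunLike.congr_fun (hderiv.unique (hasFDerivAt_const 0 x)) u

lemma fderiv_fderiv_eq_zero_of_symmetric_gradient (hp : ContDiff ℝ 2 p)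
    (hsym : ∀ x v w, fderiv ℝ p x v ⬝ᵥ w + fderiv ℝ p x w ⬝ᵥ v = 0) :
    fderiv ℝ (fderiv ℝ p) = 0 := by
  funext x
  ext u v i
  have hschwarz := hp.contDiffAt.isSymmSndFDerivAt (x := x)
    (by simp [minSmoothness_of_isRCLikeNormedField])
  simpa [dotProduct_single] using eq_zero_of_symm_of_antisymm
    (fun u v w => fderiv ℝ (fderiv ℝ p) x u v ⬝ᵥ w) (fun u v w => by rw [hschwarz u v])
    (fderiv_fderiv_dotProduct_antisymm ((hp.fderiv_right (m := 1) le_rfl).differentiable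
      one_ne_zero) hsym x)
    u v (Pi.single i 1)

end SymmetricGradient

/-- A `C²` vector field on `ℝ³` whose symmetric gradient vanishes
identically is a rigid body motion `x ↦ α + ω ×ᵥ x`. -/
theorem rigid_body_motion_of_symmetric_gradient_eq_zero
    (p : (Fin 3 → ℝ) → (Fin 3 → ℝ)) (hp : ContDiff ℝ 2 p)
    (hsym : ∀ x v w, (fderiv ℝ p x v) ⬝ᵥ w + (fderiv ℝ p x w) ⬝ᵥ v = 0) :
    ∃ α ω : Fin 3 → ℝ, ∀ x, p x = α + ω ⨯₃ x := by
  have hDp_const : ∀ x, fderiv ℝ p x = fderiv ℝ p 0 := fun x =>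
    is_const_of_fderiv_eq_zero ((hp.fderiv_right (m := 1) le_rfl).differentiable one_ne_zero)
      (congrFun (fderiv_fderiv_eq_zero_of_symmetric_gradient hp hsym)) x 0
  obtain ⟨ω, hω⟩ := exists_cross_eq_of_dotProduct_skew (fderiv ℝ p 0 : _ →ₗ[ℝ] _) (hsym 0)
  refine ⟨p 0, ω, fun x => ?_⟩
  rw [apply_eq_apply_zero_add_of_fderiv_eq (hp.differentiable two_ne_zero) hDp_const x]
  exact congrArg (p 0 + ·) (hω x)
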